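/- Let Λ be a commutative unital ring and C a small category. A morphism f of unbounded chain complexes of presheaves of Λ-modules on C is a degreewise epimorphism and a quasi-isomorphism if and only if f has the right lifting property with respect to the set I' of morphisms ∂ΔⁿΛ(c) → ΔⁿΛ(c) for all n ∈ ℤ and c ∈ C, where ∂ΔⁿΛ(c) → ΔⁿΛ(c) is the identity of Λ(c) ⊕ Λ(c) in degree n−1. -/

import Mathlib

open CategoryTheory CategoryTheory.Limits ZeroObject

universe v u

variable {A : Type u} [Category.{v} A] [Abelian A]


/-- The graded object underlying the two-term complex. -/
noncomputable def twoTermX (F G : A) (n i : ℤ) : A :=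
  if i = n then F else if i = n - 1 then G else 0

lemma twoTermX_self (F G : A) (n : ℤ) : twoTermX F G n n = F := if_pos rfl

lemma twoTermX_pred (F G : A) (n : ℤ) : twoTermX F G n (n - 1) = G := by
  unfold twoTermX
  rw [if_neg (by omega), if_pos rfl]

/-- The differential of the two-term complex. -/
noncomputable def twoTermD {F G : A} (φ : F ⟶ G) (n i j : ℤ) :
    twoTermX F G n i ⟶ twoTermX F G n j :=
  if h : i = n ∧ j = n - 1 then
    eqToHom (by rw [h.1]; exact twoTermX_self F G n) ≫ φ ≫
      eqToHom (by rw [h.2]; exact (twoTermX_pred F G n).symm)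
  else 0

lemma twoTermD_self {F G : A} (φ : F ⟶ G) (n : ℤ) :
    twoTermD φ n n (n - 1) =
      eqToHom (twoTermX_self F G n) ≫ φ ≫ eqToHom (twoTermX_pred F G n).symm :=
  dif_pos ⟨rfl, rfl⟩

lemma twoTermD_eq_zero {F G : A} (φ : F ⟶ G) {n i j : ℤ} (h : ¬(i = n ∧ j = n - 1)) :
    twoTermD φ n i j = 0 := dif_neg h

/-- The chain complex with `F` in degree `n`, `G` in degree `n-1`, differential `φ`
from degree `n` to degree `n-1`, and `0` elsewhere. -/
noncomputable def twoTerm {F G : A} (φ : F ⟶ G) (n : ℤ) : ChainComplex A ℤ where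
  X := twoTermX F G n
  d := twoTermD φ n
  shape i j hij := by
    apply twoTermD_eq_zero
    rintro ⟨rfl, rfl⟩
    exact hij (by simp)
  d_comp_d' i j k hij hjk := by
    simp only [ComplexShape.down_Rel] at hij hjk
    by_cases h : i = n ∧ j = n - 1
    · obtain ⟨h1, h2⟩ := h
      rw [twoTermD_eq_zero φ (i := j) (j := k) (by rintro ⟨h3, -⟩; omega), comp_zero]
    · rw [twoTermD_eq_zero φ h, zero_comp]

/-- The degreewise components of a morphism of two-term complexes. -/
noncomputable def twoTermMapF {F G F' G' : A} (a : F ⟶ F') (b : G ⟶ G') (n i : ℤ) :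
    twoTermX F G n i ⟶ twoTermX F' G' n i :=
  if h : i = n then
    eqToHom (by rw [h]; exact twoTermX_self F G n) ≫ a ≫
      eqToHom (by rw [h]; exact (twoTermX_self F' G' n).symm)
  else if h' : i = n - 1 then
    eqToHom (by rw [h']; exact twoTermX_pred F G n) ≫ b ≫
      eqToHom (by rw [h']; exact (twoTermX_pred F' G' n).symm)
  else 0

lemma twoTermMapF_self {F G F' G' : A} (a : F ⟶ F') (b : G ⟶ G') (n : ℤ) :
    twoTermMapF (G := G) (G' := G') a b n n =
      eqToHom (twoTermX_self F G n) ≫ a ≫ eqToHom (twoTermX_self F' G' n).symm :=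
  dif_pos rfl

lemma twoTermMapF_pred {F G F' G' : A} (a : F ⟶ F') (b : G ⟶ G') (n : ℤ) :
    twoTermMapF (F := F) (F' := F') a b n (n - 1) =
      eqToHom (twoTermX_pred F G n) ≫ b ≫ eqToHom (twoTermX_pred F' G' n).symm := by
  unfold twoTermMapF
  rw [dif_neg (by omega), dif_pos rfl]

/-- A morphism of two-term complexes induced by a compatible pair of morphisms. -/
noncomputable def twoTermMap {F G F' G' : A} (φ : F ⟶ G) (φ' : F' ⟶ G')
    (a : F ⟶ F') (b : G ⟶ G') (w : φ ≫ b = a ≫ φ') (n : ℤ) :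
    twoTerm φ n ⟶ twoTerm φ' n where
  f := twoTermMapF a b n
  comm' i j hij := by
    simp only [ComplexShape.down_Rel] at hij
    show twoTermMapF a b n i ≫ twoTermD φ' n i j = twoTermD φ n i j ≫ twoTermMapF a b n j
    by_cases h1 : i = n
    · obtain rfl : j = n - 1 := by omega
      obtain rfl : i = n := h1
      rw [twoTermMapF_self, twoTermMapF_pred, twoTermD_self, twoTermD_self]
      simp only [Category.assoc, eqToHom_trans, eqToHom_trans_assoc, eqToHom_refl,
        Category.id_comp, Category.comp_id]
      slice_lhs 2 3 => rw [← w]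
      simp only [Category.assoc]
    · rw [twoTermD_eq_zero φ' (by rintro ⟨h3, -⟩; exact h1 h3),
        twoTermD_eq_zero φ (by rintro ⟨h3, -⟩; exact h1 h3), zero_comp, comp_zero]

/-- The category of presheaves of `Λ`-modules on a small category `C`. -/
abbrev PSh (Λ : Type u) [CommRing Λ] (C : Type u) [SmallCategory C] :=
  Cᵒᵖ ⥤ ModuleCat.{u} Λ

variable (Λ : Type u) [CommRing Λ] (C : Type u) [SmallCategory C]

/-- `Λ(c)`, the free presheaf of `Λ`-modules on the presheaf represented by `c`. -/
noncomputable def representableΛ (c : C) : PSh Λ C := yoneda.obj c ⋙ ModuleCat.free Λ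

/-- The canonical morphism `∂ΔⁿF ⟶ ΔⁿF` which is the identity of `F ⊞ F` in degree
`n-1`.  Here `ΔⁿF` is the complex with `F` in degree `n`, `F ⊞ F` in degree `n-1`
and differential `id × (-id)`, and `∂ΔⁿF` is the complex with `F ⊞ F` in degree
`n-1` and zero elsewhere. -/
noncomputable def boundaryToSimplex {F : A} (n : ℤ) :
    twoTerm (0 : (0 : A) ⟶ F ⊞ F) n ⟶ twoTerm (biprod.lift (𝟙 F) (-𝟙 F)) n :=
  twoTermMap _ _ 0 (𝟙 (F ⊞ F)) (by simp) n

/-! A map from `∂ΔⁿF ⟶ ΔⁿF` to `f : K ⟶ K'` amounts to an `(n-1)`-cycle `z` of `K` and an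
`n`-chain `v` of `K'` with `d v = f z` (both with coefficients in `F`), and a lift is an
`n`-chain `v'` of `K` with `f v' = v` and `d v' = z`. The presheaves `Λ(c)` are projective and
separate morphisms, so everything can be tested on such generalized elements. If `f` is a
surjective quasi-isomorphism, injectivity on homology writes `z = d w`, surjectivity on homology
corrects the cycle `v - f w` by a cycle `s` of `K` up to a boundary `d t` of `K'`, and `t` lifts
through `f`. Conversely, lifts with `z = 0` lift cycles, which gives surjectivity of `f` and of
`H(f)`, and lifts with `v` a boundary give injectivity of `H(f)`. -/

lemma epi_of_forall_exists_comp_eq {𝒜 : Type*} [Category 𝒜] {ι : Type*} {P : ι → 𝒜}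
    (hP : (ObjectProperty.ofObj P).IsSeparating) {X Y : 𝒜} (g : X ⟶ Y)
    (h : ∀ i (φ : P i ⟶ Y), ∃ ψ, ψ ≫ g = φ) : Epi g :=
  ⟨fun k k' hk ↦ hP k k' (by
    rintro _ ⟨i⟩ φ
    obtain ⟨ψ, rfl⟩ := h i φ
    simp [hk])⟩

section CycleClass

open HomologicalComplex

variable {𝒜 : Type*} [Category 𝒜] [Abelian 𝒜] {K K' : ChainComplex 𝒜 ℤ} {Q : 𝒜} {a c : ℤ}

lemma comp_f_comp_d_eq_zero (f : K ⟶ K') {z : Q ⟶ K.X a} {b : ℤ} (hz : z ≫ K.d a b = 0) :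
    (z ≫ f.f a) ≫ K'.d a b = 0 := by
  rw [Category.assoc, f.comm, reassoc_of% hz, zero_comp]

noncomputable def cycleClass (K : ChainComplex 𝒜 ℤ) (z : Q ⟶ K.X a)
    (hz : z ≫ K.d a (a - 1) = 0) : Q ⟶ K.homology a :=
  K.liftCycles z (a - 1) (ChainComplex.next ℤ a) hz ≫ K.homologyπ a

lemma cycleClass_comp_homologyMap (f : K ⟶ K') (z : Q ⟶ K.X a) (hz : z ≫ K.d a (a - 1) = 0) :
    cycleClass K z hz ≫ homologyMap f a =
      cycleClass K' (z ≫ f.f a) (comp_f_comp_d_eq_zero f hz) := by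
  rw [cycleClass, Category.assoc, homologyπ_naturality, liftCycles_comp_cyclesMap_assoc,
    cycleClass]

lemma cycleClass_eq_zero_of_eq_d {z : Q ⟶ K.X a} (hz : z ≫ K.d a (a - 1) = 0)
    (x : Q ⟶ K.X c) (hx : z = x ≫ K.d c a) : cycleClass K z hz = 0 :=
  K.liftCycles_homologyπ_eq_zero_of_boundary z (a - 1) _ x hx

lemma exists_cycleClass_eq [Projective Q] (γ : Q ⟶ K.homology a) :
    ∃ (z : Q ⟶ K.X a) (hz : z ≫ K.d a (a - 1) = 0), cycleClass K z hz = γ := by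
  obtain ⟨z, rfl⟩ := Projective.factors γ (K.homologyπ a)
  refine ⟨z ≫ K.iCycles a, by simp, ?_⟩
  rw [cycleClass]
  congr 1
  simp [← cancel_mono (K.iCycles a)]

lemma exists_eq_add_d_of_cycleClass_eq [Projective Q] (hac : a + 1 = c) {z z' : Q ⟶ K.X a}
    (hz : z ≫ K.d a (a - 1) = 0) (hz' : z' ≫ K.d a (a - 1) = 0)
    (h : cycleClass K z hz = cycleClass K z' hz') : ∃ x : Q ⟶ K.X c, z = z' + x ≫ K.d c a := by
  obtain ⟨Q', π, _, x, hx⟩ := (K.liftCycles_comp_homologyπ_eq_iff_up_to_refinements c a (a - 1)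
    (hac ▸ ChainComplex.prev ℤ a) _ z z' hz hz').1 h
  obtain ⟨σ, hσ⟩ := Projective.factors (𝟙 Q) π
  refine ⟨σ ≫ x, ?_⟩
  simpa [reassoc_of% hσ] using σ ≫= hx

lemma exists_d_eq_of_cycleClass_eq_zero [Projective Q] (hac : a + 1 = c) {z : Q ⟶ K.X a}
    (hz : z ≫ K.d a (a - 1) = 0) (h : cycleClass K z hz = 0) :
    ∃ x : Q ⟶ K.X c, x ≫ K.d c a = z := by
  obtain ⟨x, hx⟩ := exists_eq_add_d_of_cycleClass_eq hac hz zero_comp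
    (h.trans (cycleClass_eq_zero_of_eq_d zero_comp (0 : Q ⟶ K.X (a + 1)) (by simp)).symm)
  exact ⟨x, by simpa using hx.symm⟩

end CycleClass

section BoundaryLifts

open HomologicalComplex

variable {𝒜 : Type*} [Category 𝒜] [Abelian 𝒜] {K K' : ChainComplex 𝒜 ℤ} (f : K ⟶ K') {Q : 𝒜}

def HasBoundaryLifts (P : 𝒜) (a : ℤ) : Prop :=
  ∀ b, b + 1 = a → ∀ z : P ⟶ K.X b, z ≫ K.d b (b - 1) = 0 →
    ∀ v : P ⟶ K'.X a, v ≫ K'.d a b = z ≫ f.f b →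
      ∃ v' : P ⟶ K.X a, v' ≫ f.f a = v ∧ v' ≫ K.d a b = z

lemma exists_d_eq_of_quasiIsoAt {a b : ℤ} [QuasiIsoAt f b] [Projective Q] (hab : b + 1 = a)
    (z : Q ⟶ K.X b) (hz : z ≫ K.d b (b - 1) = 0) (v : Q ⟶ K'.X a)
    (hv : v ≫ K'.d a b = z ≫ f.f b) : ∃ w : Q ⟶ K.X a, w ≫ K.d a b = z := by
  refine exists_d_eq_of_cycleClass_eq_zero hab hz ?_
  rw [← cancel_mono (homologyMap f b), zero_comp, cycleClass_comp_homologyMap]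
  exact cycleClass_eq_zero_of_eq_d _ v hv.symm

lemma exists_cycle_comp_eq_add_d {a c : ℤ} [QuasiIsoAt f a] [Projective Q] (hac : a + 1 = c)
    (y : Q ⟶ K'.X a) (hy : y ≫ K'.d a (a - 1) = 0) :
    ∃ s : Q ⟶ K.X a, s ≫ K.d a (a - 1) = 0 ∧
      ∃ t : Q ⟶ K'.X c, s ≫ f.f a = y + t ≫ K'.d c a := by
  obtain ⟨s, hs, hsy⟩ := exists_cycleClass_eq (cycleClass K' y hy ≫ inv (homologyMap f a))
  refine ⟨s, hs, exists_eq_add_d_of_cycleClass_eq hac (comp_f_comp_d_eq_zero f hs) hy ?_⟩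
  rw [← cycleClass_comp_homologyMap f s hs, hsy, Category.assoc, IsIso.inv_hom_id,
    Category.comp_id]

lemma HasBoundaryLifts.of_quasiIsoAt {a : ℤ} [Epi (f.f (a + 1))] [QuasiIsoAt f a]
    [QuasiIsoAt f (a - 1)] [Projective Q] : HasBoundaryLifts f Q a := by
  intro b hab z hz v hv
  obtain rfl : b = a - 1 := by omega
  obtain ⟨w, hw⟩ := exists_d_eq_of_quasiIsoAt f hab z hz v hv
  have hcycle : (v - w ≫ f.f a) ≫ K'.d a (a - 1) = 0 := by
    rw [Preadditive.sub_comp, hv, Category.assoc, f.comm, reassoc_of% hw, sub_self]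
  obtain ⟨s, hs, t, hst⟩ := exists_cycle_comp_eq_add_d f rfl _ hcycle
  obtain ⟨t', rfl⟩ := Projective.factors t (f.f (a + 1))
  refine ⟨w + s - t' ≫ K.d (a + 1) a, ?_, ?_⟩
  · simp only [Preadditive.add_comp, Preadditive.sub_comp, hst, Category.assoc, f.comm]
    abel
  · simp [hw, hs]

lemma HasBoundaryLifts.exists_cycle_lift {a : ℤ} (h : HasBoundaryLifts f Q a)
    (v : Q ⟶ K'.X a) (hv : v ≫ K'.d a (a - 1) = 0) :
    ∃ v' : Q ⟶ K.X a, v' ≫ f.f a = v ∧ v' ≫ K.d a (a - 1) = 0 :=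
  h (a - 1) (by omega) 0 zero_comp v (by rw [hv, zero_comp])

variable {ι : Type*} {P : ι → 𝒜} (hP : (ObjectProperty.ofObj P).IsSeparating)
  (h : ∀ i a, HasBoundaryLifts f (P i) a)
include hP h

lemma epi_f_of_hasBoundaryLifts (a : ℤ) : Epi (f.f a) := by
  refine epi_of_forall_exists_comp_eq hP _ fun i φ ↦ ?_
  have hb : (φ ≫ K'.d a (a - 1)) ≫ K'.d (a - 1) (a - 1 - 1) = 0 := by simp
  obtain ⟨z, hzf, hz⟩ := (h i (a - 1)).exists_cycle_lift _ _ hb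
  obtain ⟨v', hv', -⟩ := h i a (a - 1) (by omega) z hz φ hzf.symm
  exact ⟨v', hv'⟩

variable [∀ i, Projective (P i)]

lemma mono_homologyMap_of_hasBoundaryLifts (a : ℤ) : Mono (homologyMap f a) := by
  refine (Preadditive.mono_iff_cancel_zero _).2 fun T y hy ↦
    (Preadditive.isSeparating_iff _).1 hP y ?_
  rintro _ ⟨i⟩ φ
  obtain ⟨s, hs, hsφ⟩ := exists_cycleClass_eq (φ ≫ y)
  have hfs : cycleClass K' (s ≫ f.f a) (comp_f_comp_d_eq_zero f hs) = 0 := by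
    rw [← cycleClass_comp_homologyMap f s hs, hsφ, Category.assoc, hy, comp_zero]
  obtain ⟨t, ht⟩ := exists_d_eq_of_cycleClass_eq_zero rfl (comp_f_comp_d_eq_zero f hs) hfs
  obtain ⟨v', -, hv'⟩ := h i (a + 1) a rfl s hs t ht
  rw [← hsφ]
  exact cycleClass_eq_zero_of_eq_d hs v' hv'.symm

lemma epi_homologyMap_of_hasBoundaryLifts (a : ℤ) : Epi (homologyMap f a) := by
  refine epi_of_forall_exists_comp_eq hP _ fun i y ↦ ?_
  obtain ⟨z, hz, rfl⟩ := exists_cycleClass_eq y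
  obtain ⟨v', rfl, hv'⟩ := (h i a).exists_cycle_lift _ z hz
  exact ⟨cycleClass K v' hv', cycleClass_comp_homologyMap f v' hv'⟩

lemma quasiIso_of_hasBoundaryLifts : QuasiIso f := by
  rw [quasiIso_iff]
  intro a
  rw [quasiIsoAt_iff_isIso_homologyMap]
  have := mono_homologyMap_of_hasBoundaryLifts f hP h a
  have := epi_homologyMap_of_hasBoundaryLifts f hP h a
  exact isIso_of_mono_of_epi _

end BoundaryLifts

section TwoTermHom

variable {F G : A} {φ : F ⟶ G} {n : ℤ} {K K' : ChainComplex A ℤ}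

lemma twoTermX_isZero (F G : A) {n i : ℤ} (h₁ : i ≠ n) (h₂ : i ≠ n - 1) :
    IsZero (twoTermX F G n i) := by
  rw [twoTermX, if_neg h₁, if_neg h₂]
  exact isZero_zero A

noncomputable def twoTermDescF (n : ℤ) (K : ChainComplex A ℤ) (v : F ⟶ K.X n)
    (w : G ⟶ K.X (n - 1)) (i : ℤ) : twoTermX F G n i ⟶ K.X i :=
  if h : i = n then
    eqToHom (by rw [h]; exact twoTermX_self F G n) ≫ v ≫ eqToHom (by rw [h])
  else if h' : i = n - 1 then
    eqToHom (by rw [h']; exact twoTermX_pred F G n) ≫ w ≫ eqToHom (by rw [h'])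
  else 0

lemma twoTermDescF_self (v : F ⟶ K.X n) (w : G ⟶ K.X (n - 1)) :
    twoTermDescF n K v w n = eqToHom (twoTermX_self F G n) ≫ v := by
  simp [twoTermDescF]

lemma twoTermDescF_pred (v : F ⟶ K.X n) (w : G ⟶ K.X (n - 1)) :
    twoTermDescF n K v w (n - 1) = eqToHom (twoTermX_pred F G n) ≫ w := by
  simp [twoTermDescF]

lemma twoTermDescF_eq_zero (v : F ⟶ K.X n) (w : G ⟶ K.X (n - 1)) {i : ℤ} (h₁ : i ≠ n)
    (h₂ : i ≠ n - 1) : twoTermDescF n K v w i = 0 := by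
  rw [twoTermDescF, dif_neg h₁, dif_neg h₂]

noncomputable def twoTermDesc (φ : F ⟶ G) (n : ℤ) (K : ChainComplex A ℤ) (v : F ⟶ K.X n)
    (w : G ⟶ K.X (n - 1)) (hw : w ≫ K.d (n - 1) (n - 1 - 1) = 0)
    (hv : v ≫ K.d n (n - 1) = φ ≫ w) : twoTerm φ n ⟶ K where
  f := twoTermDescF n K v w
  comm' i j hij := by
    simp only [ComplexShape.down_Rel] at hij
    change twoTermDescF n K v w i ≫ K.d i j = twoTermD φ n i j ≫ twoTermDescF n K v w j
    by_cases h₁ : i = n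
    · subst h₁
      obtain rfl : j = i - 1 := by omega
      simp only [twoTermDescF_self, twoTermDescF_pred, twoTermD_self, Category.assoc,
        eqToHom_trans_assoc, eqToHom_refl, Category.id_comp]
      rw [hv]
    by_cases h₂ : i = n - 1
    · subst h₂
      obtain rfl : j = n - 1 - 1 := by omega
      rw [twoTermDescF_pred, twoTermD_eq_zero φ (by omega), Category.assoc, hw, comp_zero,
        zero_comp]
    · rw [twoTermDescF_eq_zero v w h₁ h₂, twoTermD_eq_zero φ (by tauto), zero_comp, zero_comp]

lemma twoTerm_X_self (φ : F ⟶ G) (n : ℤ) : (twoTerm φ n).X n = F := twoTermX_self F G n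

lemma twoTerm_X_pred (φ : F ⟶ G) (n : ℤ) : (twoTerm φ n).X (n - 1) = G := twoTermX_pred F G n

noncomputable def twoTermHomSelf (α : twoTerm φ n ⟶ K) : F ⟶ K.X n :=
  eqToHom (twoTerm_X_self φ n).symm ≫ α.f n

noncomputable def twoTermHomPred (α : twoTerm φ n ⟶ K) : G ⟶ K.X (n - 1) :=
  eqToHom (twoTerm_X_pred φ n).symm ≫ α.f (n - 1)

lemma twoTermHomPred_comp_d (α : twoTerm φ n ⟶ K) :
    twoTermHomPred α ≫ K.d (n - 1) (n - 1 - 1) = 0 := by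
  have hd : (twoTerm φ n).d (n - 1) (n - 1 - 1) = 0 := twoTermD_eq_zero φ (by omega)
  rw [twoTermHomPred, Category.assoc, α.comm, hd, zero_comp, comp_zero]

lemma twoTermHomSelf_comp_d (α : twoTerm φ n ⟶ K) :
    twoTermHomSelf α ≫ K.d n (n - 1) = φ ≫ twoTermHomPred α := by
  have hd : (twoTerm φ n).d n (n - 1) =
      eqToHom (twoTerm_X_self φ n) ≫ φ ≫ eqToHom (twoTerm_X_pred φ n).symm := twoTermD_self φ n
  rw [twoTermHomSelf, twoTermHomPred, Category.assoc, α.comm, hd]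
  simp

lemma twoTermHomSelf_comp (α : twoTerm φ n ⟶ K) (g : K ⟶ K') :
    twoTermHomSelf (α ≫ g) = twoTermHomSelf α ≫ g.f n := by
  simp [twoTermHomSelf]

lemma twoTermHomPred_comp (α : twoTerm φ n ⟶ K) (g : K ⟶ K') :
    twoTermHomPred (α ≫ g) = twoTermHomPred α ≫ g.f (n - 1) := by
  simp [twoTermHomPred]

lemma twoTermHomSelf_desc (v : F ⟶ K.X n) (w : G ⟶ K.X (n - 1)) hw hv :
    twoTermHomSelf (twoTermDesc φ n K v w hw hv) = v := by
  change eqToHom (twoTermX_self F G n).symm ≫ twoTermDescF n K v w n = v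
  simp [twoTermDescF_self]

lemma twoTermHomPred_desc (v : F ⟶ K.X n) (w : G ⟶ K.X (n - 1)) hw hv :
    twoTermHomPred (twoTermDesc φ n K v w hw hv) = w := by
  change eqToHom (twoTermX_pred F G n).symm ≫ twoTermDescF n K v w (n - 1) = w
  simp [twoTermDescF_pred]

lemma twoTerm_hom_ext {α β : twoTerm φ n ⟶ K} (h₁ : twoTermHomSelf α = twoTermHomSelf β)
    (h₂ : twoTermHomPred α = twoTermHomPred β) : α = β := by
  ext i
  by_cases hn : i = n
  · subst hn
    exact (cancel_epi (eqToHom (twoTerm_X_self φ i).symm)).1 h₁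
  by_cases hp : i = n - 1
  · subst hp
    exact (cancel_epi (eqToHom (twoTerm_X_pred φ n).symm)).1 h₂
  · exact (twoTermX_isZero F G hn hp).eq_of_src _ _

lemma twoTerm_zero_hom_ext {α β : twoTerm (0 : (0 : A) ⟶ G) n ⟶ K}
    (h : twoTermHomPred α = twoTermHomPred β) : α = β :=
  twoTerm_hom_ext ((isZero_zero A).eq_of_src _ _) h

lemma twoTermHomPred_twoTermMap_comp {F' G' : A} {φ' : F' ⟶ G'} (a : F ⟶ F') (b : G ⟶ G')
    (w : φ ≫ b = a ≫ φ') (α : twoTerm φ' n ⟶ K) :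
    twoTermHomPred (twoTermMap φ φ' a b w n ≫ α) = b ≫ twoTermHomPred α := by
  have hf : (twoTermMap φ φ' a b w n).f (n - 1) =
      eqToHom (twoTerm_X_pred φ n) ≫ b ≫ eqToHom (twoTerm_X_pred φ' n).symm :=
    twoTermMapF_pred a b n
  simp [twoTermHomPred, hf]

end TwoTermHom

lemma twoTermHomPred_boundaryToSimplex_comp {F : A} {n : ℤ} {K : ChainComplex A ℤ}
    (α : twoTerm (biprod.lift (𝟙 F) (-𝟙 F)) n ⟶ K) :
    twoTermHomPred (boundaryToSimplex n ≫ α) = twoTermHomPred α :=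
  (twoTermHomPred_twoTermMap_comp _ _ _ α).trans (Category.id_comp _)

lemma hasLiftingProperty_boundaryToSimplex_iff {F : A} {K K' : ChainComplex A ℤ} (f : K ⟶ K')
    (n : ℤ) : HasLiftingProperty (boundaryToSimplex (F := F) n) f ↔ HasBoundaryLifts f F n := by
  constructor
  · intro hf b hb z hz v hv
    obtain rfl : b = n - 1 := by omega
    -- the degree `n - 1` part of a square is some `u` with `(𝟙, -𝟙) ≫ u = z`
    have hu : biprod.desc z (0 : F ⟶ _) ≫ K.d (n - 1) (n - 1 - 1) = 0 := by ext <;> simp [hz]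
    let top := twoTermDesc (0 : (0 : A) ⟶ F ⊞ F) n K 0 (biprod.desc z (0 : F ⟶ _)) hu (by simp)
    let bot := twoTermDesc (biprod.lift (𝟙 F) (-𝟙 F)) n K' v _ (comp_f_comp_d_eq_zero f hu)
      (by simp [hv])
    have sq : CommSq top (boundaryToSimplex n) f bot := ⟨twoTerm_zero_hom_ext (by
      rw [twoTermHomPred_comp, twoTermHomPred_boundaryToSimplex_comp, twoTermHomPred_desc,
        twoTermHomPred_desc])⟩
    refine ⟨twoTermHomSelf sq.lift, ?_, ?_⟩
    · rw [← twoTermHomSelf_comp, sq.fac_right, twoTermHomSelf_desc]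
    · rw [twoTermHomSelf_comp_d, ← twoTermHomPred_boundaryToSimplex_comp, sq.fac_left,
        twoTermHomPred_desc]
      simp
  · refine fun hf ↦ ⟨fun {top bot} sq ↦ ?_⟩
    have hpred : twoTermHomPred top ≫ f.f (n - 1) = twoTermHomPred bot := by
      rw [← twoTermHomPred_comp, sq.w, twoTermHomPred_boundaryToSimplex_comp]
    obtain ⟨v', hv'f, hv'd⟩ := hf (n - 1) (by omega) (biprod.lift (𝟙 F) (-𝟙 F) ≫ twoTermHomPred top)
      (by rw [Category.assoc, twoTermHomPred_comp_d, comp_zero]) (twoTermHomSelf bot)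
      (by rw [twoTermHomSelf_comp_d, Category.assoc, hpred])
    exact ⟨⟨{ l := twoTermDesc _ n K v' (twoTermHomPred top) (twoTermHomPred_comp_d top) hv'd
              fac_left := twoTerm_zero_hom_ext (by
                rw [twoTermHomPred_boundaryToSimplex_comp, twoTermHomPred_desc])
              fac_right := twoTerm_hom_ext
                (by rw [twoTermHomSelf_comp, twoTermHomSelf_desc, hv'f])
                (by rw [twoTermHomPred_comp, twoTermHomPred_desc, hpred]) }⟩⟩

noncomputable def representableΛHomEquiv (c : C) (G : PSh Λ C) :
    (representableΛ Λ C c ⟶ G) ≃ G.obj (Opposite.op c) :=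
  (((ModuleCat.adj Λ).whiskerRight Cᵒᵖ).homEquiv (yoneda.obj c) G).trans yonedaEquiv

lemma representableΛHomEquiv_comp {c : C} {G G' : PSh Λ C} (φ : representableΛ Λ C c ⟶ G)
    (g : G ⟶ G') :
    representableΛHomEquiv Λ C c G' (φ ≫ g) =
      g.app (Opposite.op c) (representableΛHomEquiv Λ C c G φ) :=
  rfl

instance (c : C) : Projective (representableΛ Λ C c) where
  factors {E X} φ e _ := by
    obtain ⟨x, hx⟩ := (ModuleCat.epi_iff_surjective (e.app (Opposite.op c))).1 inferInstance
      (representableΛHomEquiv Λ C c X φ)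
    refine ⟨(representableΛHomEquiv Λ C c E).symm x, (representableΛHomEquiv Λ C c X).injective ?_⟩
    rw [representableΛHomEquiv_comp, Equiv.apply_symm_apply, hx]

lemma isSeparating_representableΛ : (ObjectProperty.ofObj (representableΛ Λ C)).IsSeparating := by
  intro X Y g g' h
  ext c x
  have := congrArg (representableΛHomEquiv Λ C c.unop Y)
    (h _ ⟨c.unop⟩ ((representableΛHomEquiv Λ C c.unop X).symm x))
  rwa [representableΛHomEquiv_comp, representableΛHomEquiv_comp, Equiv.apply_symm_apply] at this

/-- A morphism of unbounded chain complexes of presheaves of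
`Λ`-modules is a degreewise epimorphism and a quasi-isomorphism if and only if it
has the right lifting property with respect to the set `I'` of morphisms
`∂ΔⁿΛ(c) ⟶ ΔⁿΛ(c)`. -/
theorem trivialFibration_iff_rlp_I'
    {K K' : ChainComplex (PSh Λ C) ℤ} (f : K ⟶ K') :
    ((∀ n : ℤ, Epi (f.f n)) ∧ QuasiIso f) ↔
      ∀ (n : ℤ) (c : C),
        HasLiftingProperty (boundaryToSimplex (F := representableΛ Λ C c) n) f := by
  simp only [hasLiftingProperty_boundaryToSimplex_iff]
  constructor
  · rintro ⟨hepi, _⟩ n c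
    have := hepi (n + 1)
    exact HasBoundaryLifts.of_quasiIsoAt f
  · intro h
    have h' : ∀ c n, HasBoundaryLifts f (representableΛ Λ C c) n := fun c n ↦ h n c
    exact ⟨epi_f_of_hasBoundaryLifts f (isSeparating_representableΛ Λ C) h',
      quasiIso_of_hasBoundaryLifts f (isSeparating_representableΛ Λ C) h'⟩
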